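/- Let (K,v) be a complete discretely valued field with residue field k of characteristic not dividing d!. If k has an anisotropic diagonal form of degree d and dimension n, then K has an anisotropic diagonal form of degree d and dimension dn. -/

import Mathlib

def IsotropicDiag (K : Type*) [Field K] (d : ℕ) {ι : Type*} [Fintype ι] (a : ι → K) : Prop :=
  ∃ x : ι → K, x ≠ 0 ∧ ∑ i, a i * x i ^ d = 0

/-!
Lift the anisotropic form `⟨ā₁, …, āₙ⟩` to units `aᵢ` and take
`⟨a⟩ ⊥ π⟨a⟩ ⊥ ⋯ ⊥ π^(d-1)⟨a⟩` for a uniformizer `π`. Given an integral zero `x` of it, write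
`sⱼ = ∑ᵢ aᵢ xⱼᵢ^d`, so that `∑ⱼ πʲ sⱼ = 0`. Anisotropy of the residue form says that
`π ∣ sⱼ` forces `π ∣ xⱼᵢ` for all `i`, hence `π^d ∣ sⱼ`; since the exponents `j < d` are
distinct modulo `d`, this makes every `sⱼ`, and so every `xⱼᵢ`, divisible by `π`. Then `x / π`
is again a zero, and infinite descent gives `x = 0`.
-/

open IsLocalRing

section IsotropicDiag

variable {K : Type*} [Field K] {d : ℕ}

lemma IsotropicDiag.of_comp_equiv {ι κ : Type*} [Fintype ι] [Fintype κ] {b : κ → K}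
    (e : ι ≃ κ) (h : IsotropicDiag K d (b ∘ e)) : IsotropicDiag K d b := by
  obtain ⟨x, hx0, hx⟩ := h
  refine ⟨x ∘ e.symm, fun h0 => hx0 ?_, ?_⟩
  · ext i
    simpa using congrFun h0 (e i)
  · rw [← e.sum_comp]
    simpa using hx

lemma IsotropicDiag.exists_integral_zero {A : Type*} [CommRing A] [IsDomain A] [Algebra A K]
    [IsFractionRing A K] {ι : Type*} [Fintype ι] {b : ι → A}
    (h : IsotropicDiag K d (algebraMap A K ∘ b)) :
    ∃ x : ι → A, x ≠ 0 ∧ ∑ i, b i * x i ^ d = 0 := by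
  obtain ⟨x, hx0, hx⟩ := h
  obtain ⟨t, ht⟩ := IsLocalization.exist_integer_multiples_of_finite (nonZeroDivisors A) x
  choose y hy using ht
  have ht0 : algebraMap A K t ≠ 0 :=
    IsFractionRing.to_map_ne_zero_of_mem_nonZeroDivisors t.2
  have hy' : ∀ i, algebraMap A K (y i) = algebraMap A K t * x i := fun i => by
    rw [hy, Algebra.smul_def]
  refine ⟨y, fun hy0 => hx0 (funext fun i => ?_), IsFractionRing.injective A K ?_⟩
  · simpa [hy0, ht0] using hy' i
  · simp only [map_sum, map_mul, map_pow, hy', mul_pow, map_zero]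
    calc ∑ i, algebraMap A K (b i) * (algebraMap A K t ^ d * x i ^ d)
        = algebraMap A K t ^ d * ∑ i, algebraMap A K (b i) * x i ^ d := by
          rw [Finset.mul_sum]
          exact Finset.sum_congr rfl fun i _ => by ring
      _ = 0 := by rw [show ∑ i, algebraMap A K (b i) * x i ^ d = 0 from hx, mul_zero]

end IsotropicDiag

lemma dvd_of_sum_pow_mul_eq_zero {R : Type*} [CommRing R] [IsDomain R] {π : R} (hπ : π ≠ 0)
    {d : ℕ} {s : Fin d → R} (hs : ∀ j, π ∣ s j → π ^ d ∣ s j)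
    (hsum : ∑ j : Fin d, π ^ (j : ℕ) * s j = 0) (j : Fin d) : π ∣ s j := by
  induction j using WellFoundedLT.induction with
  | _ j ih =>
  have hother : ∀ j' ≠ j, π ^ ((j : ℕ) + 1) ∣ π ^ (j' : ℕ) * s j' := by
    intro j' hne
    rcases lt_or_gt_of_ne hne with hlt | hgt
    · -- `j' + d > j` because `j < d`
      calc π ^ ((j : ℕ) + 1) ∣ π ^ ((j' : ℕ) + d) := pow_dvd_pow π (by omega)
        _ ∣ π ^ (j' : ℕ) * s j' := by
          rw [pow_add]
          exact mul_dvd_mul_left _ (hs j' (ih j' hlt))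
    · exact (pow_dvd_pow π (Fin.lt_def.mp hgt)).mul_right _
  have hj : π ^ ((j : ℕ) + 1) ∣ π ^ (j : ℕ) * s j := by
    rw [← Finset.add_sum_erase _ _ (Finset.mem_univ j)] at hsum
    refine (dvd_add_left (Finset.dvd_sum fun j' hj' => ?_)).mp (hsum ▸ dvd_zero _)
    exact hother j' (Finset.ne_of_mem_erase hj')
  rwa [pow_succ, mul_dvd_mul_iff_left (pow_ne_zero _ hπ)] at hj

lemma eq_zero_of_forall_dvd_of_sum_mul_pow_eq_zero {A : Type*} [CommRing A] [IsDomain A]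
    [WfDvdMonoid A] {π : A} (hπ : ¬IsUnit π) (hπ0 : π ≠ 0) {ι : Type*} [Fintype ι]
    {b : ι → A} {d : ℕ} (hdvd : ∀ x : ι → A, ∑ i, b i * x i ^ d = 0 → ∀ i, π ∣ x i)
    {x : ι → A} (hx : ∑ i, b i * x i ^ d = 0) : x = 0 := by
  have hpow : ∀ k, ∀ x : ι → A, ∑ i, b i * x i ^ d = 0 → ∀ i, π ^ k ∣ x i := by
    intro k
    induction k with
    | zero => simp
    | succ k ih =>
      intro x hx i
      choose y hy using hdvd x hx
      have hy0 : ∑ i, b i * y i ^ d = 0 := by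
        refine (mul_eq_zero.mp ?_).resolve_left (pow_ne_zero d hπ0)
        rw [← hx, Finset.mul_sum]
        exact Finset.sum_congr rfl fun i _ => by rw [hy, mul_pow]; ring
      rw [hy, pow_succ']
      exact mul_dvd_mul_left π (ih y hy0 i)
  funext i
  by_contra hxi
  obtain ⟨k, hk⟩ := FiniteMultiplicity.of_not_isUnit hπ hxi
  exact hk (hpow (k + 1) x hx i)

lemma forall_mem_maximalIdeal_of_sum_mul_pow_mem {A : Type*} [CommRing A] [IsLocalRing A]
    {d : ℕ} {ι : Type*} [Fintype ι] {a : ι → A}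
    (ha : ¬IsotropicDiag (ResidueField A) d (residue A ∘ a)) {y : ι → A}
    (hy : ∑ i, a i * y i ^ d ∈ maximalIdeal A) (i : ι) : y i ∈ maximalIdeal A := by
  by_contra hyi
  refine ha ⟨residue A ∘ y, fun h0 => hyi ?_, ?_⟩
  · exact (residue_eq_zero_iff _).mp (congrFun h0 i)
  · simpa using (residue_eq_zero_iff _).mpr hy

section DVR

variable {A : Type*} [CommRing A] [IsDomain A] [IsDiscreteValuationRing A] {π : A}
  {d : ℕ} {ι : Type*} [Fintype ι] {a : ι → A}

lemma pow_dvd_sum_mul_pow_of_dvd (hπ : Irreducible π)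
    (ha : ¬IsotropicDiag (ResidueField A) d (residue A ∘ a)) {y : ι → A}
    (hy : π ∣ ∑ i, a i * y i ^ d) : π ^ d ∣ ∑ i, a i * y i ^ d := by
  simp only [← Ideal.mem_span_singleton, ← hπ.maximalIdeal_eq] at hy
  refine Finset.dvd_sum fun i _ => (pow_dvd_pow_of_dvd ?_ d).mul_left _
  rw [← Ideal.mem_span_singleton, ← hπ.maximalIdeal_eq]
  exact forall_mem_maximalIdeal_of_sum_mul_pow_mem ha hy i

lemma dvd_of_sum_pow_mul_mul_pow_eq_zero (hπ : Irreducible π)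
    (ha : ¬IsotropicDiag (ResidueField A) d (residue A ∘ a)) {x : Fin d × ι → A}
    (hx : ∑ c, π ^ (c.1 : ℕ) * a c.2 * x c ^ d = 0) (c : Fin d × ι) : π ∣ x c := by
  set s : Fin d → A := fun j => ∑ i, a i * x (j, i) ^ d
  have hs : ∑ j : Fin d, π ^ (j : ℕ) * s j = 0 := by
    rw [← hx, Fintype.sum_prod_type]
    simp only [s, Finset.mul_sum, mul_assoc]
  have hsj := dvd_of_sum_pow_mul_eq_zero hπ.ne_zero
    (fun j => pow_dvd_sum_mul_pow_of_dvd hπ ha) hs c.1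
  rw [← Ideal.mem_span_singleton, ← hπ.maximalIdeal_eq] at hsj ⊢
  exact forall_mem_maximalIdeal_of_sum_mul_pow_mem ha hsj c.2

end DVR

theorem anisotropic_lift_general
    (A : Type*) [CommRing A] [IsDomain A] [IsDiscreteValuationRing A]
    (d : ℕ)
    (n : ℕ)
    (hk : ∃ a : Fin n → IsLocalRing.ResidueField A, (∀ i, a i ≠ 0) ∧
      ¬ IsotropicDiag (IsLocalRing.ResidueField A) d a) :
    ∃ b : Fin (d * n) → FractionRing A, (∀ i, b i ≠ 0) ∧
      ¬ IsotropicDiag (FractionRing A) d b := by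
  obtain ⟨ā, hā0, hā⟩ := hk
  choose a ha using fun i => residue_surjective (ā i)
  have hres : residue A ∘ a = ā := funext ha
  obtain ⟨π, hπ⟩ := IsDiscreteValuationRing.exists_irreducible A
  let b : Fin d × Fin n → A := fun c => π ^ (c.1 : ℕ) * a c.2
  let e : Fin (d * n) ≃ Fin d × Fin n := finProdFinEquiv.symm
  refine ⟨algebraMap A (FractionRing A) ∘ b ∘ e, fun c => ?_, fun hiso => ?_⟩
  · refine (map_ne_zero_iff _ (IsFractionRing.injective A _)).mpr
      (mul_ne_zero (pow_ne_zero _ hπ.ne_zero) fun h0 => hā0 (e c).2 ?_)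
    rw [← ha, h0, map_zero]
  · obtain ⟨x, hx0, hx⟩ := (hiso.of_comp_equiv e).exists_integral_zero
    exact hx0 (eq_zero_of_forall_dvd_of_sum_mul_pow_eq_zero hπ.not_isUnit hπ.ne_zero
      (fun y hy => dvd_of_sum_pow_mul_mul_pow_eq_zero hπ (hres ▸ hā) hy) hx)

/-- **Let `(K,v)` be a complete discretely valued field** (the fraction field of a complete
discrete valuation ring `A`) **with residue field `k` of characteristic not dividing `d!`.
If `k` has an anisotropic diagonal form of degree `d` and dimension `n`, then `K` has an
anisotropic diagonal form of degree `d` and dimension `dn`.** -/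
theorem anisotropic_lift
    (A : Type*) [CommRing A] [IsDomain A] [IsDiscreteValuationRing A]
    [IsAdicComplete (IsLocalRing.maximalIdeal A) A]
    (d : ℕ) (hd : 1 ≤ d) (hchar : (d.factorial : IsLocalRing.ResidueField A) ≠ 0)
    (n : ℕ)
    (hk : ∃ a : Fin n → IsLocalRing.ResidueField A, (∀ i, a i ≠ 0) ∧
      ¬ IsotropicDiag (IsLocalRing.ResidueField A) d a) :
    ∃ b : Fin (d * n) → FractionRing A, (∀ i, b i ≠ 0) ∧
      ¬ IsotropicDiag (FractionRing A) d b :=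
  anisotropic_lift_general A d n hk
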